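/- Corollary 1 (composite convex optimization): let f : ℝ^d → ℝ be convex and differentiable, and run the CODER iteration with F = ∇f, where ∇f satisfies the blockwise Lipschitz assumption with masked-matrix constant L and g(x) = ∑_i gⁱ(xⁱ) with each gⁱ γ-strongly convex (γ ≥ 0). Let x⋆ be any minimizer of f + g over ℝ^d and x̃_k = (1/A_k)∑_{j=1}^k a_j x_j. Then for every k ≥ 1: f(x̃_k) + g(x̃_k) − (f(x⋆) + g(x⋆)) ≤ ‖x⋆ − x₀‖²/(2A_k), where A_k ≥ max{k/(2L), (1/(2L))(1 + γ/(2L))^{k−1}}. -/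

import Mathlib

open scoped RealInnerProductSpace

/-- Operator norm of a square real matrix, viewed as a linear map on Euclidean space. -/
noncomputable def matOpNorm {d : ℕ} (Q : Matrix (Fin d) (Fin d) ℝ) : ℝ :=
  ‖Matrix.toEuclideanCLM (𝕜 := ℝ) Q‖

/-- The quadratic form `vᵀ Q v` on Euclidean space. -/
noncomputable def quadForm {d : ℕ} (Q : Matrix (Fin d) (Fin d) ℝ)
    (v : EuclideanSpace ℝ (Fin d)) : ℝ :=
  ⟪v, Matrix.toEuclideanCLM (𝕜 := ℝ) Q v⟫

/-!
Lyapunov argument. Write `ψ_k(·) = ψ k · x⋆` for the estimate sequence and `D_k = F(x_k) - p_k` for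
the error of the cyclically refreshed gradient. The potential
`V_k = ψ_k(x_k) + a_k ⟪D_k, x_k - x⋆⟫ - (L a_k / 2) ‖x_k - x_{k-1}‖²`
increases by at least the weighted gap `a_k (⟪F x_k, x_k - x⋆⟫ + g x_k - g x⋆)` at every step:
`ψ_{k-1}` is `(1 + γ A_{k-1})`-strongly convex and `1 + γ A_{k-1} = 2 L a_k`, so its growth away
from its minimizer `x_{k-1}` pays for the extrapolation error, which is controlled through the masked
matrices by `‖D_k‖ ≤ L ‖x_k - x_{k-1}‖`. Since `V_0 = 0` and `V_k ≤ ‖x⋆ - x₀‖² / 2`, the weighted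
gaps sum to at most `‖x⋆ - x₀‖² / 2`; the gradient inequality for `f` and Jensen's inequality for
the average `x̃_k` then give the bound on `(f + g)(x̃_k) - (f + g)(x⋆)`.
-/

open Finset Filter Topology

section Convexity

variable {E : Type*} [NormedAddCommGroup E] [InnerProductSpace ℝ E]

theorem ConvexOn.sum {ι : Type*} {s : Set E} {t : Finset ι} {f : ι → E → ℝ}
    (hs : Convex ℝ s) (hf : ∀ i ∈ t, ConvexOn ℝ s (f i)) :
    ConvexOn ℝ s fun z => ∑ i ∈ t, f i z := by
  classical
  induction t using Finset.induction_on with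
  | empty => simpa using convexOn_const 0 hs
  | insert i t hi ih =>
    simp only [sum_insert hi]
    exact (hf i (mem_insert_self i t)).add (ih fun j hj => hf j (mem_insert_of_mem hj))

theorem StrongConvexOn.add_sq_norm_sub_le_of_isMinOn {f : E → ℝ} {m : ℝ} {x : E}
    (hf : StrongConvexOn Set.univ m f) (hx : IsMinOn f Set.univ x) (z : E) :
    f x + m / 2 * ‖z - x‖ ^ 2 ≤ f z := by
  have hseg : ∀ t ∈ Set.Ioo (0 : ℝ) 1, f x + m / 2 * (1 - t) * ‖z - x‖ ^ 2 ≤ f z := by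
    rintro t ⟨ht0, ht1⟩
    have hconv := hf.2 (Set.mem_univ z) (Set.mem_univ x) ht0.le (sub_nonneg.2 ht1.le)
      (add_sub_cancel t 1)
    have hmin : f x ≤ f (t • z + (1 - t) • x) := hx (Set.mem_univ _)
    simp only [smul_eq_mul] at hconv
    nlinarith
  have hlim : Tendsto (fun t : ℝ => f x + m / 2 * (1 - t) * ‖z - x‖ ^ 2) (𝓝[>] 0)
      (𝓝 (f x + m / 2 * ‖z - x‖ ^ 2)) := by
    have : Continuous fun t : ℝ => f x + m / 2 * (1 - t) * ‖z - x‖ ^ 2 := by fun_prop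
    simpa using (this.tendsto 0).mono_left nhdsWithin_le_nhds
  exact le_of_tendsto hlim (eventually_of_mem (Ioo_mem_nhdsGT one_pos) hseg)

theorem ConvexOn.inner_gradient_le_sub [CompleteSpace E] {f : E → ℝ}
    (hf : ConvexOn ℝ Set.univ f) {z : E} (hfz : DifferentiableAt ℝ f z) (w : E) :
    ⟪gradient f z, w - z⟫ ≤ f w - f z := by
  have hline : ConvexOn ℝ Set.univ (f ∘ AffineMap.lineMap (k := ℝ) z w) := by
    simpa using hf.comp_affineMap (AffineMap.lineMap (k := ℝ) z w)
  have hderiv : HasDerivAt (f ∘ AffineMap.lineMap (k := ℝ) z w) ⟪gradient f z, w - z⟫ 0 := by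
    have hfz' : HasFDerivAt f (InnerProductSpace.toDual ℝ E (gradient f z))
        (AffineMap.lineMap z w (0 : ℝ)) := by
      simpa using hfz.hasGradientAt.hasFDerivAt
    simpa using hfz'.comp_hasDerivAt (0 : ℝ) AffineMap.hasDerivAt_lineMap
  simpa [slope_def_field] using
    hline.le_slope_of_hasDerivAt (Set.mem_univ 0) (Set.mem_univ 1) one_pos hderiv

theorem sum_mul_add_centerMass_sub_le [CompleteSpace E] {ι : Type*} {f G : E → ℝ}
    (hf : ConvexOn ℝ Set.univ f) (hfd : ∀ z, DifferentiableAt ℝ f z) (hG : ConvexOn ℝ Set.univ G) {s : Finset ι} {w : ι → ℝ}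
    (hw : ∀ i ∈ s, 0 ≤ w i) (hws : 0 < ∑ i ∈ s, w i) (y : ι → E) (u : E) :
    (∑ i ∈ s, w i) * (f (s.centerMass w y) + G (s.centerMass w y) - (f u + G u))
      ≤ ∑ i ∈ s, w i * (⟪gradient f (y i), y i - u⟫ + G (y i) - G u) := by
  have hjensen := (hf.add hG).map_centerMass_le hw hws fun i _ => Set.mem_univ (y i)
  simp only [centerMass, smul_eq_mul, Function.comp_apply, Pi.add_apply] at hjensen
  have hgrad : ∀ i ∈ s, w i * (f (y i) + G (y i) - (f u + G u))
      ≤ w i * (⟪gradient f (y i), y i - u⟫ + G (y i) - G u) := by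
    intro i hi
    have := hf.inner_gradient_le_sub (hfd (y i)) u
    rw [← neg_sub (y i), inner_neg_right] at this
    exact mul_le_mul_of_nonneg_left (by linarith) (hw i hi)
  have hjensen' : (∑ i ∈ s, w i) * (f (s.centerMass w y) + G (s.centerMass w y))
      ≤ ∑ i ∈ s, w i * (f (y i) + G (y i)) := by
    have := mul_le_mul_of_nonneg_left hjensen hws.le
    rwa [mul_inv_cancel_left₀ hws.ne'] at this
  calc (∑ i ∈ s, w i) * (f (s.centerMass w y) + G (s.centerMass w y) - (f u + G u))
      ≤ ∑ i ∈ s, w i * (f (y i) + G (y i) - (f u + G u)) := by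
        simp only [mul_sub, sum_sub_distrib, ← sum_mul]
        linarith
    _ ≤ _ := sum_le_sum hgrad

end Convexity

structure IsCoderStepSizes (γ L : ℝ) (a A : ℕ → ℝ) : Prop where
  a_zero : a 0 = 0
  A_zero : A 0 = 0
  a_succ : ∀ k, a (k + 1) = (1 + γ * A k) / (2 * L)
  A_succ : ∀ k, A (k + 1) = A k + a (k + 1)

namespace IsCoderStepSizes

variable {γ L : ℝ} {a A : ℕ → ℝ}

theorem A_eq_sum (h : IsCoderStepSizes γ L a A) (k : ℕ) : A k = ∑ j ∈ Icc 1 k, a j := by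
  induction k with
  | zero => simp [h.A_zero]
  | succ k ih => rw [sum_Icc_succ_top (by omega), ← ih, h.A_succ]

theorem two_mul_mul_a_succ (h : IsCoderStepSizes γ L a A) (hL : 0 < L) (k : ℕ) :
    2 * L * a (k + 1) = 1 + γ * A k := by
  rw [h.a_succ]
  field_simp

theorem A_nonneg (h : IsCoderStepSizes γ L a A) (hγ : 0 ≤ γ) (hL : 0 < L) (k : ℕ) :
    0 ≤ A k := by
  induction k with
  | zero => exact h.A_zero.ge
  | succ k ih => rw [h.A_succ, h.a_succ]; positivity

theorem a_succ_pos (h : IsCoderStepSizes γ L a A) (hγ : 0 ≤ γ) (hL : 0 < L) (k : ℕ) :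
    0 < a (k + 1) := by
  rw [h.a_succ]
  have := h.A_nonneg hγ hL k
  positivity

theorem a_nonneg (h : IsCoderStepSizes γ L a A) (hγ : 0 ≤ γ) (hL : 0 < L) (k : ℕ) :
    0 ≤ a k := by
  cases k with
  | zero => exact h.a_zero.ge
  | succ k => exact (h.a_succ_pos hγ hL k).le

theorem A_le_A_succ (h : IsCoderStepSizes γ L a A) (hγ : 0 ≤ γ) (hL : 0 < L) (k : ℕ) :
    A k ≤ A (k + 1) := by
  rw [h.A_succ]
  linarith [h.a_nonneg hγ hL (k + 1)]

theorem a_le_a_succ (h : IsCoderStepSizes γ L a A) (hγ : 0 ≤ γ) (hL : 0 < L) (k : ℕ) :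
    a k ≤ a (k + 1) := by
  cases k with
  | zero => rw [h.a_zero]; exact h.a_nonneg hγ hL 1
  | succ k =>
    rw [h.a_succ, h.a_succ]
    gcongr
    exact h.A_le_A_succ hγ hL k

theorem two_mul_mul_a_le (h : IsCoderStepSizes γ L a A) (hγ : 0 ≤ γ) (hL : 0 < L) (k : ℕ) :
    2 * L * a k ≤ 1 + γ * A k := by
  cases k with
  | zero => rw [h.a_zero, mul_zero]; linarith [mul_nonneg hγ (h.A_nonneg hγ hL 0)]
  | succ k =>
    rw [h.two_mul_mul_a_succ hL]
    gcongr
    exact h.A_le_A_succ hγ hL k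

theorem div_le_A (h : IsCoderStepSizes γ L a A) (hγ : 0 ≤ γ) (hL : 0 < L) (k : ℕ) :
    k / (2 * L) ≤ A k := by
  induction k with
  | zero => simp [h.A_zero]
  | succ k ih =>
    have : 1 / (2 * L) ≤ a (k + 1) := by
      rw [h.a_succ]
      gcongr
      linarith [mul_nonneg hγ (h.A_nonneg hγ hL k)]
    rw [h.A_succ]
    push_cast
    linarith [add_div (k : ℝ) 1 (2 * L)]

theorem A_pos (h : IsCoderStepSizes γ L a A) (hγ : 0 ≤ γ) (hL : 0 < L) {k : ℕ} (hk : 1 ≤ k) :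
    0 < A k :=
  lt_of_lt_of_le (by positivity) (h.div_le_A hγ hL k)

theorem geom_le_A (h : IsCoderStepSizes γ L a A) (hγ : 0 ≤ γ) (hL : 0 < L) {k : ℕ}
    (hk : 1 ≤ k) : 1 / (2 * L) * (1 + γ / (2 * L)) ^ (k - 1) ≤ A k := by
  obtain ⟨n, rfl⟩ : ∃ n, k = n + 1 := ⟨k - 1, by omega⟩
  rw [Nat.add_sub_cancel]
  induction n with
  | zero => simp [h.A_succ, h.a_succ, h.A_zero]
  | succ n ih =>
    have hgrowth : A (n + 1) * (1 + γ / (2 * L)) ≤ A (n + 2) := by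
      calc A (n + 1) * (1 + γ / (2 * L)) = A (n + 1) + γ * A (n + 1) / (2 * L) := by ring
        _ ≤ A (n + 1) + (1 + γ * A (n + 1)) / (2 * L) := by gcongr; linarith
        _ = A (n + 2) := by rw [h.A_succ (n + 1), h.a_succ]
    calc 1 / (2 * L) * (1 + γ / (2 * L)) ^ (n + 1)
        = 1 / (2 * L) * (1 + γ / (2 * L)) ^ n * (1 + γ / (2 * L)) := by ring
      _ ≤ A (n + 1) * (1 + γ / (2 * L)) := by gcongr; exact ih (by omega)
      _ ≤ A (n + 2) := hgrowth

end IsCoderStepSizes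

section EstimateSequence

variable {E : Type*} [NormedAddCommGroup E] [InnerProductSpace ℝ E]

noncomputable def estimateSeq (a : ℕ → ℝ) (q : ℕ → E) (G : E → ℝ) (x₀ : E) (k : ℕ) (z u : E) : ℝ :=
  ∑ j ∈ Icc 1 k, a j * (⟪q j, z - u⟫ + G z - G u) + 1 / 2 * ‖z - x₀‖ ^ 2

variable {a : ℕ → ℝ} {q : ℕ → E} {G : E → ℝ} {x₀ : E}

theorem estimateSeq_zero (z u : E) : estimateSeq a q G x₀ 0 z u = 1 / 2 * ‖z - x₀‖ ^ 2 := by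
  simp [estimateSeq]

theorem estimateSeq_self (k : ℕ) (u : E) : estimateSeq a q G x₀ k u u = 1 / 2 * ‖u - x₀‖ ^ 2 := by
  simp [estimateSeq]

theorem estimateSeq_succ (k : ℕ) (z u : E) :
    estimateSeq a q G x₀ (k + 1) z u
      = estimateSeq a q G x₀ k z u + a (k + 1) * (⟪q (k + 1), z - u⟫ + G z - G u) := by
  simp only [estimateSeq, sum_Icc_succ_top (Nat.le_add_left 1 k)]
  ring

theorem strongConvexOn_estimateSeq {γ : ℝ} (hG : StrongConvexOn Set.univ γ G)
    (ha : ∀ j, 0 ≤ a j) (k : ℕ) (u : E) :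
    StrongConvexOn Set.univ (1 + γ * ∑ j ∈ Icc 1 k, a j) (estimateSeq a q G x₀ k · u) := by
  set A := ∑ j ∈ Icc 1 k, a j
  set V := ∑ j ∈ Icc 1 k, a j • q j
  have hsplit : (fun z => estimateSeq a q G x₀ k z u - (1 + γ * A) / 2 * ‖z‖ ^ 2)
      = fun z => A * (G z - γ / 2 * ‖z‖ ^ 2)
          + (⟪V - x₀, z⟫ + (1 / 2 * ‖x₀‖ ^ 2 - ⟪V, u⟫ - A * G u)) := by
    funext z
    have hlin : ∑ j ∈ Icc 1 k, a j * (⟪q j, z - u⟫ + G z - G u)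
        = ⟪V, z - u⟫ + A * (G z - G u) := by
      simp only [V, A, sum_inner, real_inner_smul_left, sum_mul, ← sum_add_distrib]
      exact sum_congr rfl fun j _ => by ring
    rw [estimateSeq, hlin, inner_sub_left, inner_sub_right, norm_sub_sq_real,
      real_inner_comm x₀ z]
    ring
  have hA : 0 ≤ A := sum_nonneg fun j _ => ha j
  have haffine : ConvexOn ℝ Set.univ fun z : E =>
      ⟪V - x₀, z⟫ + (1 / 2 * ‖x₀‖ ^ 2 - ⟪V, u⟫ - A * G u) :=
    ((innerₛₗ ℝ (V - x₀)).convexOn convex_univ).add_const _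
  rw [strongConvexOn_iff_convex, hsplit]
  exact ((strongConvexOn_iff_convex.1 hG).smul hA).add haffine

end EstimateSequence

section Coder

variable {E : Type*} [NormedAddCommGroup E] [InnerProductSpace ℝ E]
  {F : E → E} {G : E → ℝ} {γ L : ℝ} {a A : ℕ → ℝ} {x p q : ℕ → E} {u : E}

theorem estimateSeq_add_sq_norm_sub_le (h : IsCoderStepSizes γ L a A) (hγ : 0 ≤ γ) (hL : 0 < L)
    (hG : StrongConvexOn Set.univ γ G)
    (hxmin : ∀ k, 1 ≤ k → IsMinOn (estimateSeq a q G (x 0) k · u) Set.univ (x k))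
    (k : ℕ) (z : E) :
    estimateSeq a q G (x 0) k (x k) u + (1 + γ * A k) / 2 * ‖z - x k‖ ^ 2
      ≤ estimateSeq a q G (x 0) k z u := by
  cases k with
  | zero => simp [estimateSeq_zero, h.A_zero]
  | succ k =>
    rw [h.A_eq_sum]
    exact (strongConvexOn_estimateSeq hG (h.a_nonneg hγ hL) (k + 1) u)
      |>.add_sq_norm_sub_le_of_isMinOn (hxmin (k + 1) (Nat.le_add_left 1 k)) z

theorem mul_inner_gradient_error_le (hL : 0 ≤ L) (ha0 : a 0 = 0)
    (hD : ∀ k, ‖F (x (k + 1)) - p (k + 1)‖ ≤ L * ‖x (k + 1) - x k‖) {k : ℕ} (ha : 0 ≤ a k)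
    (v : E) : a k * ⟪F (x k) - p k, v⟫ ≤ L * a k / 2 * (‖x k - x (k - 1)‖ ^ 2 + ‖v‖ ^ 2) := by
  cases k with
  | zero => simp [ha0]
  | succ k =>
    rw [Nat.add_sub_cancel]
    have hcs : ⟪F (x (k + 1)) - p (k + 1), v⟫ ≤ L * ‖x (k + 1) - x k‖ * ‖v‖ :=
      (real_inner_le_norm _ _).trans (by gcongr; exact hD k)
    calc a (k + 1) * ⟪F (x (k + 1)) - p (k + 1), v⟫
        ≤ a (k + 1) * (L * ‖x (k + 1) - x k‖ * ‖v‖) := mul_le_mul_of_nonneg_left hcs ha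
      _ = L * a (k + 1) / 2 * (2 * ‖x (k + 1) - x k‖ * ‖v‖) := by ring
      _ ≤ L * a (k + 1) / 2 * (‖x (k + 1) - x k‖ ^ 2 + ‖v‖ ^ 2) := by
        gcongr; exact two_mul_le_add_sq _ _

-- At `k = 0` the truncated `k - 1` is harmless: `a 0 = 0` kills the last term.
noncomputable def coderPotential (L : ℝ) (a : ℕ → ℝ) (F : E → E) (G : E → ℝ) (x p q : ℕ → E)
    (u : E) (k : ℕ) : ℝ :=
  estimateSeq a q G (x 0) k (x k) u + a k * ⟪F (x k) - p k, x k - u⟫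
    - L * a k / 2 * ‖x k - x (k - 1)‖ ^ 2

theorem coderPotential_zero (ha0 : a 0 = 0) : coderPotential L a F G x p q u 0 = 0 := by
  simp [coderPotential, estimateSeq_zero, ha0]

theorem gap_le_coderPotential_succ_sub (h : IsCoderStepSizes γ L a A) (hγ : 0 ≤ γ) (hL : 0 < L)
    (hG : StrongConvexOn Set.univ γ G)
    (hxmin : ∀ k, 1 ≤ k → IsMinOn (estimateSeq a q G (x 0) k · u) Set.univ (x k))
    (hq : ∀ k, q (k + 1) = p (k + 1) + (a k / a (k + 1)) • (F (x k) - p k))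
    (hD : ∀ k, ‖F (x (k + 1)) - p (k + 1)‖ ≤ L * ‖x (k + 1) - x k‖) (k : ℕ) :
    a (k + 1) * (⟪F (x (k + 1)), x (k + 1) - u⟫ + G (x (k + 1)) - G u)
      ≤ coderPotential L a F G x p q u (k + 1) - coderPotential L a F G x p q u k := by
  have hgrowth := estimateSeq_add_sq_norm_sub_le h hγ hL hG hxmin k (x (k + 1))
  rw [← h.two_mul_mul_a_succ hL] at hgrowth
  have hsucc := estimateSeq_succ (a := a) (q := q) (G := G) (x₀ := x 0) k (x (k + 1)) u
  have hextrapolation : a (k + 1) * ⟪F (x (k + 1)), x (k + 1) - u⟫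
      = a (k + 1) * ⟪q (k + 1), x (k + 1) - u⟫
        + a (k + 1) * ⟪F (x (k + 1)) - p (k + 1), x (k + 1) - u⟫
        - a k * ⟪F (x k) - p k, x k - u⟫ + a k * ⟪F (x k) - p k, x k - x (k + 1)⟫ := by
    have hne : a (k + 1) ≠ 0 := (h.a_succ_pos hγ hL k).ne'
    have hshift : ⟪F (x k) - p k, x (k + 1) - u⟫
        = ⟪F (x k) - p k, x k - u⟫ - ⟪F (x k) - p k, x k - x (k + 1)⟫ := by
      rw [← inner_sub_right]; congr 1; abel
    rw [hq, inner_add_left, real_inner_smul_left, inner_sub_left (F (x (k + 1))), hshift]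
    field_simp
    ring
  have herr := mul_inner_gradient_error_le hL.le h.a_zero hD (h.a_nonneg hγ hL k) (x k - x (k + 1))
  have hmono : L * a k / 2 * ‖x (k + 1) - x k‖ ^ 2 ≤ L * a (k + 1) / 2 * ‖x (k + 1) - x k‖ ^ 2 := by
    gcongr; exact h.a_le_a_succ hγ hL k
  rw [norm_sub_rev (x k) (x (k + 1))] at herr
  simp only [coderPotential, Nat.add_sub_cancel]
  linarith

theorem sum_gap_le_coderPotential (h : IsCoderStepSizes γ L a A) (hγ : 0 ≤ γ) (hL : 0 < L)
    (hG : StrongConvexOn Set.univ γ G)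
    (hxmin : ∀ k, 1 ≤ k → IsMinOn (estimateSeq a q G (x 0) k · u) Set.univ (x k))
    (hq : ∀ k, q (k + 1) = p (k + 1) + (a k / a (k + 1)) • (F (x k) - p k))
    (hD : ∀ k, ‖F (x (k + 1)) - p (k + 1)‖ ≤ L * ‖x (k + 1) - x k‖) (k : ℕ) :
    ∑ j ∈ Icc 1 k, a j * (⟪F (x j), x j - u⟫ + G (x j) - G u)
      ≤ coderPotential L a F G x p q u k := by
  induction k with
  | zero => simp [coderPotential_zero h.a_zero]
  | succ k ih =>
    rw [sum_Icc_succ_top (Nat.le_add_left 1 k)]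
    linarith [gap_le_coderPotential_succ_sub h hγ hL hG hxmin hq hD k]

theorem coderPotential_le (h : IsCoderStepSizes γ L a A) (hγ : 0 ≤ γ) (hL : 0 < L)
    (hG : StrongConvexOn Set.univ γ G)
    (hxmin : ∀ k, 1 ≤ k → IsMinOn (estimateSeq a q G (x 0) k · u) Set.univ (x k))
    (hD : ∀ k, ‖F (x (k + 1)) - p (k + 1)‖ ≤ L * ‖x (k + 1) - x k‖) (k : ℕ) :
    coderPotential L a F G x p q u k ≤ 1 / 2 * ‖u - x 0‖ ^ 2 := by
  have hgrowth := estimateSeq_add_sq_norm_sub_le h hγ hL hG hxmin k u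
  rw [estimateSeq_self] at hgrowth
  have herr := mul_inner_gradient_error_le hL.le h.a_zero hD (h.a_nonneg hγ hL k) (x k - u)
  have hstep : L * a k / 2 * ‖x k - u‖ ^ 2 ≤ (1 + γ * A k) / 2 * ‖u - x k‖ ^ 2 := by
    rw [norm_sub_rev]
    gcongr
    linarith [h.two_mul_mul_a_le hγ hL k, mul_nonneg hL.le (h.a_nonneg hγ hL k)]
  simp only [coderPotential]
  linarith

theorem coder_sum_gap_le (h : IsCoderStepSizes γ L a A) (hγ : 0 ≤ γ) (hL : 0 < L)
    (hG : StrongConvexOn Set.univ γ G)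
    (hxmin : ∀ k, 1 ≤ k → IsMinOn (estimateSeq a q G (x 0) k · u) Set.univ (x k))
    (hq : ∀ k, q (k + 1) = p (k + 1) + (a k / a (k + 1)) • (F (x k) - p k))
    (hD : ∀ k, ‖F (x (k + 1)) - p (k + 1)‖ ≤ L * ‖x (k + 1) - x k‖) (k : ℕ) :
    ∑ j ∈ Icc 1 k, a j * (⟪F (x j), x j - u⟫ + G (x j) - G u) ≤ 1 / 2 * ‖u - x 0‖ ^ 2 :=
  (sum_gap_le_coderPotential h hγ hL hG hxmin hq hD k).trans
    (coderPotential_le h hγ hL hG hxmin hD k)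

end Coder

section Blocks

variable {d m : ℕ}

theorem quadForm_eq_sum (M : Matrix (Fin d) (Fin d) ℝ) (v : EuclideanSpace ℝ (Fin d)) :
    quadForm M v = ∑ ℓ, ∑ t, v ℓ * M ℓ t * v t := by
  simp only [quadForm, PiLp.inner_apply, Matrix.ofLp_toEuclideanCLM, Matrix.mulVec, dotProduct,
    RCLike.inner_apply, conj_trivial, sum_mul]
  exact sum_congr rfl fun ℓ _ => sum_congr rfl fun t _ => by ring

theorem quadForm_sum {ι : Type*} (s : Finset ι) (M : ι → Matrix (Fin d) (Fin d) ℝ)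
    (v : EuclideanSpace ℝ (Fin d)) : quadForm (∑ i ∈ s, M i) v = ∑ i ∈ s, quadForm (M i) v := by
  simp only [quadForm, map_sum, FunLike.coe_sum, Finset.sum_apply, inner_sum]

theorem quadForm_le_matOpNorm_mul (M : Matrix (Fin d) (Fin d) ℝ) (v : EuclideanSpace ℝ (Fin d)) :
    quadForm M v ≤ matOpNorm M * ‖v‖ ^ 2 :=
  calc quadForm M v ≤ ‖v‖ * ‖Matrix.toEuclideanCLM (𝕜 := ℝ) M v‖ := real_inner_le_norm _ _
    _ ≤ ‖v‖ * (matOpNorm M * ‖v‖) := by gcongr; exact ContinuousLinearMap.le_opNorm _ _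
    _ = matOpNorm M * ‖v‖ ^ 2 := by ring

theorem norm_sq_eq_sum_blocks (blk : Fin d → Fin m) (v : EuclideanSpace ℝ (Fin d)) :
    ‖v‖ ^ 2 = ∑ i, ∑ j ∈ univ.filter (fun j => blk j = i), v j ^ 2 := by
  simp [EuclideanSpace.norm_sq_eq, sum_fiberwise]

-- The cyclic gradient is `p_{k+1}ⁱ = Fⁱ(blockMix blk x_{k+1} x_k i)`.
def blockMix (blk : Fin d → Fin m) (z w : EuclideanSpace ℝ (Fin d)) (i : Fin m) :
    EuclideanSpace ℝ (Fin d) :=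
  WithLp.toLp 2 fun j => if blk j < i then z j else w j

theorem quadForm_sub_blockMix {blk : Fin d → Fin m} {Q Qhat : Matrix (Fin d) (Fin d) ℝ} {i : Fin m}
    (hQhat : ∀ j k, Qhat j k = if i ≤ blk j ∧ i ≤ blk k then Q j k else 0)
    (z w : EuclideanSpace ℝ (Fin d)) :
    quadForm Q (z - blockMix blk z w i) = quadForm Qhat (z - w) := by
  have hcoord : ∀ j, (z - blockMix blk z w i) j = if blk j < i then 0 else (z - w) j := by
    intro j
    by_cases hj : blk j < i <;> simp [blockMix, hj]
  simp only [quadForm_eq_sum, hcoord, hQhat]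
  refine sum_congr rfl fun j _ => sum_congr rfl fun k _ => ?_
  by_cases hj : blk j < i <;> by_cases hk : blk k < i <;> simp [hj, hk, not_lt.1]

theorem strongConvexOn_sum_blocks {blk : Fin d → Fin m} {γ : ℝ}
    {g : Fin m → EuclideanSpace ℝ (Fin d) → ℝ}
    (hg : ∀ i, ConvexOn ℝ Set.univ fun z : EuclideanSpace ℝ (Fin d) =>
      g i z - γ / 2 * ∑ j ∈ univ.filter (fun j => blk j = i), z j ^ 2) :
    StrongConvexOn Set.univ γ fun z => ∑ i, g i z := by
  rw [strongConvexOn_iff_convex]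
  convert ConvexOn.sum convex_univ fun i _ => hg i using 2 with z
  rw [sum_sub_distrib, ← mul_sum, ← norm_sq_eq_sum_blocks]

theorem norm_sub_blockMix_le {blk : Fin d → Fin m}
    {F : EuclideanSpace ℝ (Fin d) → EuclideanSpace ℝ (Fin d)}
    {Q Qhat : Fin m → Matrix (Fin d) (Fin d) ℝ} {L : ℝ} (hlip : ∀ i z w, ∑ j ∈ univ.filter (fun j => blk j = i), (F z j - F w j) ^ 2
        ≤ quadForm (Q i) (z - w))
    (hQhat : ∀ i j k, Qhat i j k = if i ≤ blk j ∧ i ≤ blk k then Q i j k else 0)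
    (hL : 0 ≤ L) (hL2 : L ^ 2 = matOpNorm (∑ i, Qhat i)) (z w : EuclideanSpace ℝ (Fin d)) :
    ‖F z - WithLp.toLp 2 (fun j => F (blockMix blk z w (blk j)) j)‖ ≤ L * ‖z - w‖ := by
  rw [← pow_le_pow_iff_left₀ (norm_nonneg _) (by positivity) two_ne_zero]
  calc ‖F z - WithLp.toLp 2 (fun j => F (blockMix blk z w (blk j)) j)‖ ^ 2
      = ∑ i, ∑ j ∈ univ.filter (fun j => blk j = i), (F z j - F (blockMix blk z w i) j) ^ 2 := by
        rw [norm_sq_eq_sum_blocks blk]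
        refine sum_congr rfl fun i _ => sum_congr rfl fun j hj => ?_
        rw [← (mem_filter.1 hj).2]
        rfl
    _ ≤ ∑ i, quadForm (Q i) (z - blockMix blk z w i) := sum_le_sum fun i _ => hlip i z _
    _ = ∑ i, quadForm (Qhat i) (z - w) :=
        sum_congr rfl fun i _ => quadForm_sub_blockMix (hQhat i) z w
    _ = quadForm (∑ i, Qhat i) (z - w) := (quadForm_sum _ _ _).symm
    _ ≤ matOpNorm (∑ i, Qhat i) * ‖z - w‖ ^ 2 := quadForm_le_matOpNorm_mul _ _
    _ = (L * ‖z - w‖) ^ 2 := by rw [← hL2]; ring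

end Blocks

theorem stmt14_general {d m : ℕ} (blk : Fin d → Fin m)
    (F : EuclideanSpace ℝ (Fin d) → EuclideanSpace ℝ (Fin d))
    (γ L : ℝ) (hγ : 0 ≤ γ) (hL : 0 < L)
    -- blockwise Lipschitz assumption
    (Q : Fin m → Matrix (Fin d) (Fin d) ℝ)
    (hlip : ∀ (i : Fin m) (z w : EuclideanSpace ℝ (Fin d)),
      ∑ j ∈ Finset.univ.filter (fun j => blk j = i), (F z j - F w j) ^ 2
        ≤ quadForm (Q i) (z - w))
    (Qhat : Fin m → Matrix (Fin d) (Fin d) ℝ)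
    (hQhat : ∀ (i : Fin m) (j k : Fin d),
      Qhat i j k = if i ≤ blk j ∧ i ≤ blk k then Q i j k else 0)
    (hL2 : L ^ 2 = matOpNorm (∑ i, Qhat i))
    -- the block components of the separable regularizer g
    (g : Fin m → EuclideanSpace ℝ (Fin d) → ℝ)
    (hgsc : ∀ i : Fin m, ConvexOn ℝ Set.univ (fun z : EuclideanSpace ℝ (Fin d) =>
      g i z - γ / 2 * ∑ j ∈ Finset.univ.filter (fun j => blk j = i), (z j) ^ 2))
    (G : EuclideanSpace ℝ (Fin d) → ℝ) (hG : ∀ z, G z = ∑ i, g i z)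
    -- step sizes
    (a A : ℕ → ℝ) (ha0 : a 0 = 0) (hA0 : A 0 = 0)
    (ha : ∀ k : ℕ, a (k + 1) = (1 + γ * A k) / (2 * L))
    (hA : ∀ k : ℕ, A (k + 1) = A k + a (k + 1))
    -- iterates, cyclic coordinate gradients, and extrapolated gradients
    (x p q : ℕ → EuclideanSpace ℝ (Fin d))
    (hp : ∀ (k : ℕ) (j : Fin d),
      p (k + 1) j = F (WithLp.toLp 2 (fun j' => if blk j' < blk j then x (k + 1) j' else x k j')) j)
    (hq : ∀ (k : ℕ) (j : Fin d),
      q (k + 1) j = p (k + 1) j + a k / a (k + 1) * (F (x k) j - p k j))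
    -- estimation sequence and its minimization property
    (ψ : ℕ → EuclideanSpace ℝ (Fin d) → EuclideanSpace ℝ (Fin d) → ℝ)
    (hψ : ∀ (k : ℕ) (z u : EuclideanSpace ℝ (Fin d)),
      ψ k z u = ∑ j ∈ Finset.Icc 1 k, a j * (⟪q j, z - u⟫ + G z - G u)
        + 1 / 2 * ‖z - x 0‖ ^ 2)
    -- the smooth part and its gradient
    (f : EuclideanSpace ℝ (Fin d) → ℝ)
    (hfconv : ConvexOn ℝ Set.univ f)
    (hfdiff : ∀ z : EuclideanSpace ℝ (Fin d), DifferentiableAt ℝ f z)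
    (hFgrad : ∀ z : EuclideanSpace ℝ (Fin d), F z = gradient f z)
    (hxmin : ∀ k : ℕ, 1 ≤ k → ∀ u z : EuclideanSpace ℝ (Fin d), ψ k (x k) u ≤ ψ k z u)
    -- averaged iterates
    (xt : ℕ → EuclideanSpace ℝ (Fin d))
    (hxt : ∀ k : ℕ, xt k = (A k)⁻¹ • ∑ j ∈ Finset.Icc 1 k, a j • x j)
    -- a minimizer of f + g
    (xstar : EuclideanSpace ℝ (Fin d)) :
    ∀ k : ℕ, 1 ≤ k →
      f (xt k) + G (xt k) - (f xstar + G xstar) ≤ ‖xstar - x 0‖ ^ 2 / (2 * A k) ∧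
      A k ≥ max ((k : ℝ) / (2 * L)) (1 / (2 * L) * (1 + γ / (2 * L)) ^ (k - 1)) := by
  intro k hk
  have hstep : IsCoderStepSizes γ L a A := ⟨ha0, hA0, ha, hA⟩
  have hGsc : StrongConvexOn Set.univ γ G := by
    simpa only [← hG] using strongConvexOn_sum_blocks hgsc
  have hD (n : ℕ) : ‖F (x (n + 1)) - p (n + 1)‖ ≤ L * ‖x (n + 1) - x n‖ := by
    convert norm_sub_blockMix_le hlip hQhat hL.le hL2 (x (n + 1)) (x n) using 3
    ext j
    exact hp n j
  have hq' (n : ℕ) : q (n + 1) = p (n + 1) + (a n / a (n + 1)) • (F (x n) - p n) := by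
    ext j
    simp [hq]
  have hxmin' (n : ℕ) (hn : 1 ≤ n) :
      IsMinOn (estimateSeq a q G (x 0) n · xstar) Set.univ (x n) := fun z _ => by
    have := hxmin n hn xstar z
    rwa [hψ, hψ] at this
  have hgap := coder_sum_gap_le hstep hγ hL hGsc hxmin' hq' hD k
  simp only [hFgrad] at hgap
  have havg := sum_mul_add_centerMass_sub_le hfconv hfdiff (hGsc.convexOn fun _ => by positivity)
    (fun j _ => hstep.a_nonneg hγ hL j) (hstep.A_eq_sum k ▸ hstep.A_pos hγ hL hk) x xstar
  rw [← hstep.A_eq_sum, centerMass, ← hstep.A_eq_sum, ← hxt] at havg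
  refine ⟨?_, max_le (hstep.div_le_A hγ hL k) (hstep.geom_le_A hγ hL hk)⟩
  rw [le_div_iff₀ (by linarith [hstep.A_pos hγ hL hk])]
  linarith

/-- **Statement 14** (Corollary 1: composite convex optimization). Let `f` be convex
and differentiable and run CODER with `F = ∇f`, where `∇f` satisfies the blockwise
Lipschitz assumption with masked-matrix constant `L`, and `g(x) = ∑ᵢ gⁱ(xⁱ)` with
each `gⁱ` `γ`-strongly convex (`γ ≥ 0`). If `x⋆` minimizes `f + g` and
`x̃_k = (1/A_k)∑_{j=1}^k a_j x_j`, then for every `k ≥ 1`: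
`f(x̃_k) + g(x̃_k) − (f(x⋆) + g(x⋆)) ≤ ‖x⋆ − x₀‖²/(2A_k)`, where
`A_k ≥ max{k/(2L), (1/(2L))(1 + γ/(2L))^{k−1}}`. -/
theorem stmt14 {d m : ℕ} (blk : Fin d → Fin m) (hblk : Monotone blk)
    (F : EuclideanSpace ℝ (Fin d) → EuclideanSpace ℝ (Fin d))
    (γ L : ℝ) (hγ : 0 ≤ γ) (hL : 0 < L)
    -- blockwise Lipschitz assumption
    (Q : Fin m → Matrix (Fin d) (Fin d) ℝ)
    (hpsd : ∀ i, (Q i).PosSemidef)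
    (hlip : ∀ (i : Fin m) (z w : EuclideanSpace ℝ (Fin d)),
      ∑ j ∈ Finset.univ.filter (fun j => blk j = i), (F z j - F w j) ^ 2
        ≤ quadForm (Q i) (z - w))
    (Qhat : Fin m → Matrix (Fin d) (Fin d) ℝ)
    (hQhat : ∀ (i : Fin m) (j k : Fin d),
      Qhat i j k = if i ≤ blk j ∧ i ≤ blk k then Q i j k else 0)
    (hL2 : L ^ 2 = matOpNorm (∑ i, Qhat i))
    -- the block components of the separable regularizer g
    (g : Fin m → EuclideanSpace ℝ (Fin d) → ℝ)
    (hgdep : ∀ (i : Fin m) (z w : EuclideanSpace ℝ (Fin d)),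
      (∀ j, blk j = i → z j = w j) → g i z = g i w)
    (hgsc : ∀ i : Fin m, ConvexOn ℝ Set.univ (fun z : EuclideanSpace ℝ (Fin d) =>
      g i z - γ / 2 * ∑ j ∈ Finset.univ.filter (fun j => blk j = i), (z j) ^ 2))
    (G : EuclideanSpace ℝ (Fin d) → ℝ) (hG : ∀ z, G z = ∑ i, g i z)
    -- step sizes
    (a A : ℕ → ℝ) (ha0 : a 0 = 0) (hA0 : A 0 = 0)
    (ha : ∀ k : ℕ, a (k + 1) = (1 + γ * A k) / (2 * L))
    (hA : ∀ k : ℕ, A (k + 1) = A k + a (k + 1))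
    -- iterates, cyclic coordinate gradients, and extrapolated gradients
    (x p q : ℕ → EuclideanSpace ℝ (Fin d))
    (hp0 : p 0 = F (x 0))
    (hp : ∀ (k : ℕ) (j : Fin d),
      p (k + 1) j = F (WithLp.toLp 2 (fun j' => if blk j' < blk j then x (k + 1) j' else x k j')) j)
    (hq : ∀ (k : ℕ) (j : Fin d),
      q (k + 1) j = p (k + 1) j + a k / a (k + 1) * (F (x k) j - p k j))
    -- estimation sequence and its minimization property
    (ψ : ℕ → EuclideanSpace ℝ (Fin d) → EuclideanSpace ℝ (Fin d) → ℝ)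
    (hψ : ∀ (k : ℕ) (z u : EuclideanSpace ℝ (Fin d)),
      ψ k z u = ∑ j ∈ Finset.Icc 1 k, a j * (⟪q j, z - u⟫ + G z - G u)
        + 1 / 2 * ‖z - x 0‖ ^ 2)
    -- the smooth part and its gradient
    (f : EuclideanSpace ℝ (Fin d) → ℝ)
    (hfconv : ConvexOn ℝ Set.univ f)
    (hfdiff : ∀ z : EuclideanSpace ℝ (Fin d), DifferentiableAt ℝ f z)
    (hFgrad : ∀ z : EuclideanSpace ℝ (Fin d), F z = gradient f z)
    (hxmin : ∀ k : ℕ, 1 ≤ k → ∀ u z : EuclideanSpace ℝ (Fin d), ψ k (x k) u ≤ ψ k z u)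
    -- averaged iterates
    (xt : ℕ → EuclideanSpace ℝ (Fin d))
    (hxt : ∀ k : ℕ, xt k = (A k)⁻¹ • ∑ j ∈ Finset.Icc 1 k, a j • x j)
    -- a minimizer of f + g
    (xstar : EuclideanSpace ℝ (Fin d))
    (hstar : ∀ z : EuclideanSpace ℝ (Fin d), f xstar + G xstar ≤ f z + G z) :
    ∀ k : ℕ, 1 ≤ k →
      f (xt k) + G (xt k) - (f xstar + G xstar) ≤ ‖xstar - x 0‖ ^ 2 / (2 * A k) ∧
      A k ≥ max ((k : ℝ) / (2 * L)) (1 / (2 * L) * (1 + γ / (2 * L)) ^ (k - 1)) :=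
  stmt14_general blk F γ L hγ hL Q hlip Qhat hQhat hL2 g hgsc G hG a A ha0 hA0 ha hA x p q hp hq ψ
    hψ f hfconv hfdiff hFgrad hxmin xt hxt xstar
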